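/- arXiv:2512.00643 — 6 statements merged into one kernel-verified Lean document; each statement's English description precedes it below -/
import Mathlib

section
/- (Smooth version of Proposition 3.6: invariance of the limiting functional under an infinitesimal change of framed geodesic.) Let n ≥ 2, L > 0, and let ℛ, ℛ̃ : [−L,L] → ℝ^{n⁴} be continuous 4-tensor fields such that ℛ̃(x₁) has the curvature symmetries for every x₁. Let (ŵ, ŷ, Ẑ, β̂) and (w̌, y̌, Ž, β̌) be two smooth data tuples as in the definition of 𝓘. Suppose there exist smooth maps J : (−L,L) → ℝⁿ and B : (−L,L) → ℝ^{n×n} with B(x₁) skew-symmetric for every x₁, such that: J₁ ≡ 0; B(x₁)e₁ = ∂_{x₁}J(x₁); (∂_{x₁}B)_{ab}(x₁) = −Σ_{k=1}^n ℛ̃_{abk1}(x₁) J_k(x₁) for all a, b; and for all j, l ∈ {2,…,n} and all (x₁,x') ∈ Ω: (i) Ẑ_{jl} = Ž_{jl} + B_{jl}; (ii) ŷ = y̌ + (J₂,…,Jₙ); (iii) ∂_{x₁}ŵ(x₁) + 𝒯^{ℛ̃(x₁)}(ŷ(x₁))₁₁ = ∂_{x₁}w̌(x₁) + 𝒯^{ℛ̃(x₁)}(y̌(x₁))₁₁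 + ½(Â² − Ǎ²)₁₁(x₁); (iv) ∂_{x_j}β̂₁(x₁,x') + 2𝒯^{ℛ̃(x₁)}(ŷ(x₁)+x')_{1j} = ∂_{x_j}β̌₁(x₁,x') + 2𝒯^{ℛ̃(x₁)}(y̌(x₁)+x')_{1j} + Σ_{l=2}^n ∂_{x₁}(Ž − Ẑ)_{jl}(x₁) x'_l + (Â² − Ǎ²)_{1j}(x₁); (v) (sym ∇'β̂')_{jl}(x₁,x') + 𝒯^{ℛ̃(x₁)}(ŷ(x₁)+x')_{jl} = (sym ∇'β̌')_{jl}(x₁,x') + 𝒯^{ℛ̃(x₁)}(y̌(x₁)+x')_{jl} + ½(Â² − Ǎ²)_{jl}(x₁), where Â and Ǎ are the skew-symmetric matrix fields built from (ŷ, Ẑ) and (y̌, Ž) respectively. Then 𝓘(ŵ, ŷ, Ẑ, β̂) = 𝓘(w̌, y̌, Ž, β̌). -/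
open MeasureTheory Set

noncomputable section

/-- A 4-tensor has the curvature symmetries. -/
def CurvSymm {N : ℕ} (A : Fin N → Fin N → Fin N → Fin N → ℝ) : Prop :=
  (∀ i j k l, A i j k l = - A j i k l) ∧
  (∀ i j k l, A i j k l = - A i j l k) ∧
  (∀ i j k l, A i j k l = A k l i j) ∧
  (∀ i j k l, A i j k l + A i k l j + A i l j k = 0)

/-- The matrix `𝒯^𝒜(x')`.  The ambient dimension is `n = m+1`; the index
`0 : Fin (m+1)` plays the role of the index `1` of the paper and `i.succ`
plays the role of a primed index `i ∈ {2,…,n}`. -/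
def Tmat {m : ℕ} (A : Fin (m+1) → Fin (m+1) → Fin (m+1) → Fin (m+1) → ℝ)
    (x : EuclideanSpace ℝ (Fin m)) : Fin (m+1) → Fin (m+1) → ℝ := fun i j =>
  Fin.cases (motive := fun _ => ℝ)
    (Fin.cases (motive := fun _ => ℝ)
      (-(1/2) * ∑ k, ∑ l, A 0 k.succ 0 l.succ * x k * x l)
      (fun j' => -(1/3) * ∑ k, ∑ l, A j'.succ k.succ 0 l.succ * x k * x l) j)
    (fun i' =>
      Fin.cases (motive := fun _ => ℝ)
        (-(1/3) * ∑ k, ∑ l, A 0 k.succ i'.succ l.succ * x k * x l)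
        (fun j' => -(1/6) * ∑ k, ∑ l, A j'.succ k.succ i'.succ l.succ * x k * x l) j) i

/-- The skew-symmetric matrix field `A(x₁)` built from `y` and `Z`. -/
def Amat {m : ℕ} (y : ℝ → EuclideanSpace ℝ (Fin m)) (Z : ℝ → Fin m → Fin m → ℝ)
    (t : ℝ) : Fin (m+1) → Fin (m+1) → ℝ := fun i j =>
  Fin.cases (motive := fun _ => ℝ)
    (Fin.cases (motive := fun _ => ℝ) 0 (fun j' => - deriv (fun s => y s j') t) j)
    (fun i' =>
      Fin.cases (motive := fun _ => ℝ) (deriv (fun s => y s i') t) (fun j' => Z t i' j') j) i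

/-- The partial derivative `∂_{x_j} β_i` in the `j`-th primed coordinate direction. -/
def pd {m : ℕ} (β : ℝ × EuclideanSpace ℝ (Fin m) → Fin (m+1) → ℝ) (i : Fin (m+1)) (j : Fin m)
    (x : ℝ × EuclideanSpace ℝ (Fin m)) : ℝ :=
  fderiv ℝ (fun p => β p i) x ((0 : ℝ), EuclideanSpace.single j (1 : ℝ))

/-- The matrix field `G`. -/
def Gmat {m : ℕ} (w : ℝ → ℝ) (y : ℝ → EuclideanSpace ℝ (Fin m)) (Z : ℝ → Fin m → Fin m → ℝ)
    (β : ℝ × EuclideanSpace ℝ (Fin m) → Fin (m+1) → ℝ) (x₁ : ℝ)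
    (x' : EuclideanSpace ℝ (Fin m)) : Fin (m+1) → Fin (m+1) → ℝ := fun i j =>
  (Fin.cases (motive := fun _ => ℝ)
      ((if i = 0 then deriv w x₁ else 0) +
        ∑ l, deriv (fun t => Amat y Z t i l.succ) x₁ * x' l)
      (fun j' => pd β i j' (x₁, x')) j)
    - (1/2) * ∑ k, Amat y Z x₁ i k * Amat y Z x₁ k j

/-- Symmetric part of a matrix. -/
def symPart {N : ℕ} (M : Fin N → Fin N → ℝ) : Fin N → Fin N → ℝ := fun i j =>
  (M i j + M j i) / 2

/-- Squared Frobenius norm. -/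
def fro2 {N : ℕ} (M : Fin N → Fin N → ℝ) : ℝ := ∑ i, ∑ j, (M i j) ^ 2

/-- Square of a matrix. -/
def matSq {N : ℕ} (M : Fin N → Fin N → ℝ) : Fin N → Fin N → ℝ := fun i j =>
  ∑ k, M i k * M k j

/-- The limiting functional `𝓘`. -/
def Ifun {m : ℕ} (L : ℝ)
    (R Rt : ℝ → Fin (m+1) → Fin (m+1) → Fin (m+1) → Fin (m+1) → ℝ)
    (w : ℝ → ℝ) (y : ℝ → EuclideanSpace ℝ (Fin m)) (Z : ℝ → Fin m → Fin m → ℝ)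
    (β : ℝ × EuclideanSpace ℝ (Fin m) → Fin (m+1) → ℝ) : ℝ :=
  ⨍ x₁ in Ioo (-L) L, ⨍ x' in Metric.ball (0 : EuclideanSpace ℝ (Fin m)) 1,
    fro2 (fun i j =>
      symPart (Gmat w y Z β x₁ x') i j
        - (Tmat (R x₁) x' i j - Tmat (Rt x₁) (y x₁ + x') i j))

/-!
The integrand of `Ifun` depends on the data only through the symmetric matrix
`symPart G + 𝒯^{ℛ̃}(y + x')`, and the hypotheses force this matrix to be the same for the two
tuples at every point. In the primed block and in the first row this is (iv) and (v) rearranged,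
using that `A²` is symmetric for skew-symmetric `A`. In the `(1,1)` entry, shifting `y` by `J`
changes `∂₁²y` by `∂₁(B e₁) = -ℛ̃(·, e₁, J, e₁)`, hence `G₁₁` by `ℛ̃(x', e₁, J, e₁)`, and it
gives `𝒯^{ℛ̃}(y + x')₁₁` the cross term `-ℛ̃(e₁, x', e₁, J)`; by the symmetries of `ℛ̃` these
two contributions linear in `x'` cancel, and (iii) takes care of the rest.
-/

open Topology

variable {m : ℕ}

lemma sum_sum_mul_add_mul_add {ι : Type*} [Fintype ι] (c : ι → ι → ℝ)
    (hc : ∀ k l, c k l = c l k) (p q : ι → ℝ) :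
    ∑ k, ∑ l, c k l * (p k + q k) * (p l + q l)
      = ∑ k, ∑ l, c k l * p k * p l + 2 * ∑ k, ∑ l, c k l * q k * p l
        + ∑ k, ∑ l, c k l * q k * q l := by
  have hswap : ∑ k, ∑ l, c k l * p k * q l = ∑ k, ∑ l, c k l * q k * p l := by
    rw [Finset.sum_comm]
    exact Finset.sum_congr rfl fun k _ => Finset.sum_congr rfl fun l _ => by rw [hc]; ring
  simp only [mul_add, add_mul, Finset.sum_add_distrib, hswap]
  ring

namespace CurvSymm

variable {N : ℕ} {A : Fin N → Fin N → Fin N → Fin N → ℝ}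

lemma pair_comm (hA : CurvSymm A) (i j k l : Fin N) : A k l i j = A i j k l :=
  (hA.2.2.1 i j k l).symm

lemma swap_swap (hA : CurvSymm A) (i j k l : Fin N) : A j i l k = A i j k l := by
  rw [hA.1 j i l k, hA.2.1 i j l k, neg_neg]

end CurvSymm

lemma CurvSymm.sum_sum_comm {A : Fin (m+1) → Fin (m+1) → Fin (m+1) → Fin (m+1) → ℝ}
    (hA : CurvSymm A) (a b : Fin (m+1)) (x : EuclideanSpace ℝ (Fin m)) :
    ∑ k, ∑ l, A b k.succ a l.succ * x k * x l = ∑ k, ∑ l, A a k.succ b l.succ * x k * x l := by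
  rw [Finset.sum_comm]
  exact Finset.sum_congr rfl fun k _ => Finset.sum_congr rfl fun l _ => by
    rw [← hA.pair_comm]; ring

lemma Tmat_symm {A : Fin (m+1) → Fin (m+1) → Fin (m+1) → Fin (m+1) → ℝ} (hA : CurvSymm A)
    (x : EuclideanSpace ℝ (Fin m)) (i j : Fin (m+1)) : Tmat A x j i = Tmat A x i j := by
  cases i using Fin.cases <;> cases j using Fin.cases <;>
    simp only [Tmat, Fin.cases_zero, Fin.cases_succ] <;> rw [hA.sum_sum_comm]

lemma Tmat_add_zero_zero {A : Fin (m+1) → Fin (m+1) → Fin (m+1) → Fin (m+1) → ℝ}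
    (hA : CurvSymm A) (z x : EuclideanSpace ℝ (Fin m)) :
    Tmat A (z + x) 0 0
      = Tmat A z 0 0 - ∑ k, ∑ l, A 0 k.succ 0 l.succ * x k * z l + Tmat A x 0 0 := by
  simp only [Tmat, Fin.cases_zero, PiLp.add_apply]
  rw [sum_sum_mul_add_mul_add _ (fun k l => hA.pair_comm _ _ _ _)]
  ring

lemma symPart_symm {N : ℕ} (M : Fin N → Fin N → ℝ) (i j : Fin N) :
    symPart M j i = symPart M i j := by
  simp only [symPart, add_comm]

lemma matSq_symm_of_skew {N : ℕ} {M : Fin N → Fin N → ℝ} (hM : ∀ i j, M j i = - M i j)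
    (i j : Fin N) : matSq M j i = matSq M i j := by
  unfold matSq
  exact Finset.sum_congr rfl fun k _ => by rw [hM k j, hM i k]; ring

lemma Amat_skew {y : ℝ → EuclideanSpace ℝ (Fin m)} {Z : ℝ → Fin m → Fin m → ℝ} {t : ℝ}
    (hZ : ∀ i j, Z t j i = - Z t i j) (i j : Fin (m+1)) :
    Amat y Z t j i = - Amat y Z t i j := by
  cases i using Fin.cases <;> cases j using Fin.cases <;>
    simp only [Amat, Fin.cases_zero, Fin.cases_succ, neg_zero, neg_neg]
  exact hZ _ _

section Gmat

variable (w : ℝ → ℝ) (y : ℝ → EuclideanSpace ℝ (Fin m)) (Z : ℝ → Fin m → Fin m → ℝ)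
  (β : ℝ × EuclideanSpace ℝ (Fin m) → Fin (m+1) → ℝ) (x₁ : ℝ) (x' : EuclideanSpace ℝ (Fin m))

lemma Gmat_zero_zero :
    Gmat w y Z β x₁ x' 0 0 = deriv w x₁ - ∑ l, deriv (deriv fun s => y s l) x₁ * x' l
      - 1/2 * matSq (Amat y Z x₁) 0 0 := by
  simp only [Gmat, if_pos, Amat, Fin.cases_zero, Fin.cases_succ, deriv.fun_neg, neg_mul,
    Finset.sum_neg_distrib, matSq]
  ring

lemma Gmat_zero_succ (j : Fin m) :
    Gmat w y Z β x₁ x' 0 j.succ = pd β 0 j (x₁, x') - 1/2 * matSq (Amat y Z x₁) 0 j.succ := by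
  simp [Gmat, matSq]

lemma Gmat_succ_zero (j : Fin m) :
    Gmat w y Z β x₁ x' j.succ 0
      = ∑ l, deriv (fun s => Z s j l) x₁ * x' l - 1/2 * matSq (Amat y Z x₁) j.succ 0 := by
  simp [Gmat, Amat, matSq]

lemma Gmat_succ_succ (i j : Fin m) :
    Gmat w y Z β x₁ x' i.succ j.succ
      = pd β i.succ j (x₁, x') - 1/2 * matSq (Amat y Z x₁) i.succ j.succ := by
  simp [Gmat, matSq]

end Gmat

section symPart

variable {w : ℝ → ℝ} {y : ℝ → EuclideanSpace ℝ (Fin m)} {Z : ℝ → Fin m → Fin m → ℝ}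
  (β : ℝ × EuclideanSpace ℝ (Fin m) → Fin (m+1) → ℝ) {x₁ : ℝ} (x' : EuclideanSpace ℝ (Fin m))

lemma symPart_Gmat_zero_zero :
    symPart (Gmat w y Z β x₁ x') 0 0 = deriv w x₁ - ∑ l, deriv (deriv fun s => y s l) x₁ * x' l
      - 1/2 * matSq (Amat y Z x₁) 0 0 := by
  rw [← Gmat_zero_zero w y Z β x₁ x', symPart, add_self_div_two]

lemma symPart_Gmat_zero_succ (hZ : ∀ i j, Z x₁ j i = - Z x₁ i j) (j : Fin m) :
    symPart (Gmat w y Z β x₁ x') 0 j.succ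
      = (pd β 0 j (x₁, x') + ∑ l, deriv (fun s => Z s j l) x₁ * x' l) / 2
        - 1/2 * matSq (Amat y Z x₁) 0 j.succ := by
  rw [symPart, Gmat_zero_succ, Gmat_succ_zero, matSq_symm_of_skew (Amat_skew hZ)]
  ring

lemma symPart_Gmat_succ_succ (hZ : ∀ i j, Z x₁ j i = - Z x₁ i j) (i j : Fin m) :
    symPart (Gmat w y Z β x₁ x') i.succ j.succ
      = (pd β i.succ j (x₁, x') + pd β j.succ i (x₁, x')) / 2
        - 1/2 * matSq (Amat y Z x₁) i.succ j.succ := by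
  rw [symPart, Gmat_succ_succ, Gmat_succ_succ, matSq_symm_of_skew (Amat_skew hZ)]
  ring

end symPart

lemma eq_of_symm_of_eq_blocks {P Q : Fin (m+1) → Fin (m+1) → ℝ}
    (hP : ∀ i j, P j i = P i j) (hQ : ∀ i j, Q j i = Q i j) (h00 : P 0 0 = Q 0 0)
    (h0s : ∀ j : Fin m, P 0 j.succ = Q 0 j.succ)
    (hss : ∀ i j : Fin m, P i.succ j.succ = Q i.succ j.succ) : P = Q := by
  ext i j
  cases i using Fin.cases <;> cases j using Fin.cases
  · exact h00
  · exact h0s _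
  · rw [hP, hQ, h0s]
  · exact hss _ _

lemma deriv_deriv_eq_of_eqOn_add {U : Set ℝ} (hU : IsOpen U) {f g h k : ℝ → ℝ} {x : ℝ}
    (hx : x ∈ U) (hf : EqOn f (fun s => g s + h s) U) (hg : ContDiffOn ℝ 2 g U)
    (hh : DifferentiableOn ℝ h U) (hk : EqOn (deriv h) k U) (hkx : DifferentiableAt ℝ k x) :
    deriv (deriv f) x = deriv (deriv g) x + deriv k x := by
  have hg1 : DifferentiableOn ℝ g U := hg.differentiableOn (by norm_num)
  have hg' : DifferentiableAt ℝ (deriv g) x :=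
    ((hg.deriv_of_isOpen hU (by norm_num : (1 : WithTop ℕ∞) + 1 ≤ 2)).differentiableOn
      one_ne_zero).differentiableAt (hU.mem_nhds hx)
  have hf' : deriv f =ᶠ[𝓝 x] fun s => deriv g s + k s := by
    filter_upwards [hU.mem_nhds hx] with s hs
    rw [hf.deriv hU hs, deriv_fun_add ((hg1 s hs).differentiableAt (hU.mem_nhds hs))
      ((hh s hs).differentiableAt (hU.mem_nhds hs)), hk hs]
  rw [hf'.deriv_eq, deriv_fun_add hg' hkx]

lemma ContDiffOn.differentiableAt_apply_apply {ι κ : Type*} [Fintype ι] [Fintype κ]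
    {F : ℝ → ι → κ → ℝ} {n : WithTop ℕ∞} {U : Set ℝ} {x : ℝ} (hF : ContDiffOn ℝ n F U)
    (hn : n ≠ 0) (hU : U ∈ 𝓝 x) (i : ι) (j : κ) : DifferentiableAt ℝ (fun s => F s i j) x :=
  differentiableAt_pi.mp (differentiableAt_pi.mp ((hF.contDiffAt hU).differentiableAt hn) i) j

lemma Ifun_congr {L : ℝ} {R Rt : ℝ → Fin (m+1) → Fin (m+1) → Fin (m+1) → Fin (m+1) → ℝ}
    {w w' : ℝ → ℝ} {y y' : ℝ → EuclideanSpace ℝ (Fin m)} {Z Z' : ℝ → Fin m → Fin m → ℝ}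
    {β β' : ℝ × EuclideanSpace ℝ (Fin m) → Fin (m+1) → ℝ}
    (h : ∀ x₁ ∈ Ioo (-L) L, ∀ x' ∈ Metric.ball (0 : EuclideanSpace ℝ (Fin m)) 1,
      (fun i j => symPart (Gmat w y Z β x₁ x') i j + Tmat (Rt x₁) (y x₁ + x') i j)
        = fun i j => symPart (Gmat w' y' Z' β' x₁ x') i j + Tmat (Rt x₁) (y' x₁ + x') i j) :
    Ifun L R Rt w y Z β = Ifun L R Rt w' y' Z' β' := by
  refine average_congr ?_
  filter_upwards [self_mem_ae_restrict measurableSet_Ioo] with x₁ hx₁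
  refine average_congr ?_
  filter_upwards [self_mem_ae_restrict measurableSet_ball] with x' hx'
  refine congrArg fro2 (funext fun i => funext fun j => ?_)
  linarith [congrFun (congrFun (h x₁ hx₁ x' hx') i) j]

lemma symPart_Gmat_add_Tmat_zero_zero
    {A : Fin (m+1) → Fin (m+1) → Fin (m+1) → Fin (m+1) → ℝ} (hA : CurvSymm A)
    {wh wc : ℝ → ℝ} {yh yc : ℝ → EuclideanSpace ℝ (Fin m)} {Zh Zc : ℝ → Fin m → Fin m → ℝ}
    (bh bc : ℝ × EuclideanSpace ℝ (Fin m) → Fin (m+1) → ℝ) {x₁ : ℝ}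
    (x' : EuclideanSpace ℝ (Fin m)) {J : Fin (m+1) → ℝ} (hJ0 : J 0 = 0)
    (hy : ∀ l, yh x₁ l = yc x₁ l + J l.succ)
    (hy'' : ∀ l, deriv (deriv fun s => yh s l) x₁
      = deriv (deriv fun s => yc s l) x₁ - ∑ k, A l.succ 0 k 0 * J k)
    (hw : deriv wh x₁ + Tmat A (yh x₁) 0 0
      = deriv wc x₁ + Tmat A (yc x₁) 0 0
        + 1/2 * (matSq (Amat yh Zh x₁) 0 0 - matSq (Amat yc Zc x₁) 0 0)) :
    symPart (Gmat wh yh Zh bh x₁ x') 0 0 + Tmat A (yh x₁ + x') 0 0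
      = symPart (Gmat wc yc Zc bc x₁ x') 0 0 + Tmat A (yc x₁ + x') 0 0 := by
  have hcross : ∑ l : Fin m, (∑ k, A l.succ 0 k 0 * J k) * x' l
      = ∑ k : Fin m, ∑ l : Fin m, A 0 k.succ 0 l.succ * x' k * J l.succ := by
    refine Finset.sum_congr rfl fun l _ => ?_
    rw [Fin.sum_univ_succ, hJ0, mul_zero, zero_add, Finset.sum_mul]
    exact Finset.sum_congr rfl fun k _ => by rw [hA.swap_swap 0 l.succ 0 k.succ]; ring
  have hsecond : ∑ l, deriv (deriv fun s => yh s l) x₁ * x' l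
      = ∑ l, deriv (deriv fun s => yc s l) x₁ * x' l
        - ∑ k : Fin m, ∑ l : Fin m, A 0 k.succ 0 l.succ * x' k * J l.succ := by
    simp only [← hcross, hy'', sub_mul, Finset.sum_sub_distrib]
  have hshift : ∑ k : Fin m, ∑ l : Fin m, A 0 k.succ 0 l.succ * x' k * yh x₁ l
      = ∑ k : Fin m, ∑ l : Fin m, A 0 k.succ 0 l.succ * x' k * yc x₁ l
        + ∑ k : Fin m, ∑ l : Fin m, A 0 k.succ 0 l.succ * x' k * J l.succ := by
    simp only [hy, mul_add, Finset.sum_add_distrib]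
  rw [symPart_Gmat_zero_zero, symPart_Gmat_zero_zero, Tmat_add_zero_zero hA,
    Tmat_add_zero_zero hA, hsecond, hshift]
  linarith

theorem Ifun_invariance_general (m : ℕ) (L : ℝ)
    (R Rt : ℝ → Fin (m+1) → Fin (m+1) → Fin (m+1) → Fin (m+1) → ℝ)
    (hRtsymm : ∀ x₁ ∈ Icc (-L) L, CurvSymm (Rt x₁))
    -- the two smooth data tuples
    (wh wc : ℝ → ℝ) (yh yc : ℝ → EuclideanSpace ℝ (Fin m))
    (Zh Zc : ℝ → Fin m → Fin m → ℝ)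
    (bh bc : ℝ × EuclideanSpace ℝ (Fin m) → Fin (m+1) → ℝ)
    (hyc : ContDiffOn ℝ (⊤ : ℕ∞) yc (Ioo (-L) L))
    (hZh : ContDiffOn ℝ (⊤ : ℕ∞) Zh (Ioo (-L) L))
    (hZc : ContDiffOn ℝ (⊤ : ℕ∞) Zc (Ioo (-L) L))
    (hZhskew : ∀ x₁ ∈ Ioo (-L) L, ∀ i j, Zh x₁ j i = - Zh x₁ i j)
    (hZcskew : ∀ x₁ ∈ Ioo (-L) L, ∀ i j, Zc x₁ j i = - Zc x₁ i j)
    -- the infinitesimal change of framed geodesic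
    (Jf : ℝ → Fin (m+1) → ℝ) (B : ℝ → Fin (m+1) → Fin (m+1) → ℝ)
    (hJsmooth : ContDiffOn ℝ (⊤ : ℕ∞) Jf (Ioo (-L) L))
    (hBsmooth : ContDiffOn ℝ (⊤ : ℕ∞) B (Ioo (-L) L))
    (hJ1 : ∀ x₁ ∈ Ioo (-L) L, Jf x₁ 0 = 0)
    (hBe1 : ∀ x₁ ∈ Ioo (-L) L, ∀ a, B x₁ a 0 = deriv (fun s => Jf s a) x₁)
    (hBode : ∀ x₁ ∈ Ioo (-L) L, ∀ a b,
      deriv (fun s => B s a b) x₁ = - ∑ k, Rt x₁ a b k 0 * Jf x₁ k)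
    -- conditions (i)–(v)
    (hii : ∀ x₁ ∈ Ioo (-L) L, ∀ j : Fin m, yh x₁ j = yc x₁ j + Jf x₁ j.succ)
    (hiii : ∀ x₁ ∈ Ioo (-L) L,
      deriv wh x₁ + Tmat (Rt x₁) (yh x₁) 0 0
        = deriv wc x₁ + Tmat (Rt x₁) (yc x₁) 0 0
          + (1/2) * (matSq (Amat yh Zh x₁) 0 0 - matSq (Amat yc Zc x₁) 0 0))
    (hiv : ∀ x₁ ∈ Ioo (-L) L, ∀ x' ∈ Metric.ball (0 : EuclideanSpace ℝ (Fin m)) 1,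
      ∀ j : Fin m,
      pd bh 0 j (x₁, x') + 2 * Tmat (Rt x₁) (yh x₁ + x') 0 j.succ
        = pd bc 0 j (x₁, x') + 2 * Tmat (Rt x₁) (yc x₁ + x') 0 j.succ
          + (∑ l, deriv (fun s => Zc s j l - Zh s j l) x₁ * x' l)
          + (matSq (Amat yh Zh x₁) 0 j.succ - matSq (Amat yc Zc x₁) 0 j.succ))
    (hv : ∀ x₁ ∈ Ioo (-L) L, ∀ x' ∈ Metric.ball (0 : EuclideanSpace ℝ (Fin m)) 1,
      ∀ j l : Fin m,
      (pd bh j.succ l (x₁, x') + pd bh l.succ j (x₁, x')) / 2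
          + Tmat (Rt x₁) (yh x₁ + x') j.succ l.succ
        = (pd bc j.succ l (x₁, x') + pd bc l.succ j (x₁, x')) / 2
          + Tmat (Rt x₁) (yc x₁ + x') j.succ l.succ
          + (1/2) * (matSq (Amat yh Zh x₁) j.succ l.succ
              - matSq (Amat yc Zc x₁) j.succ l.succ)) :
    Ifun L R Rt wh yh Zh bh = Ifun L R Rt wc yc Zc bc := by
  refine Ifun_congr fun x₁ hx₁ x' hx' => ?_
  have hA := hRtsymm x₁ (Ioo_subset_Icc_self hx₁)
  have hU : Ioo (-L) L ∈ 𝓝 x₁ := isOpen_Ioo.mem_nhds hx₁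
  refine eq_of_symm_of_eq_blocks (fun i j => by rw [symPart_symm, Tmat_symm hA])
    (fun i j => by rw [symPart_symm, Tmat_symm hA]) ?_ (fun j => ?_) (fun i j => ?_)
  · refine symPart_Gmat_add_Tmat_zero_zero hA bh bc x' (hJ1 x₁ hx₁) (hii x₁ hx₁) (fun l => ?_)
      (hiii x₁ hx₁)
    rw [deriv_deriv_eq_of_eqOn_add isOpen_Ioo hx₁ (fun s hs => hii s hs l)
      (((EuclideanSpace.proj l).contDiff.comp_contDiffOn hyc).of_le
        (WithTop.coe_le_coe.mpr le_top))
      ((contDiffOn_pi.mp hJsmooth l.succ).differentiableOn (by simp))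
      (fun s hs => (hBe1 s hs l.succ).symm)
      (hBsmooth.differentiableAt_apply_apply (by simp) hU l.succ 0),
      hBode x₁ hx₁]
    ring
  · have hsplit : ∑ l, deriv (fun s => Zc s j l - Zh s j l) x₁ * x' l
        = ∑ l, deriv (fun s => Zc s j l) x₁ * x' l
          - ∑ l, deriv (fun s => Zh s j l) x₁ * x' l := by
      simp only [deriv_fun_sub (hZc.differentiableAt_apply_apply (by simp) hU j _)
        (hZh.differentiableAt_apply_apply (by simp) hU j _), sub_mul, Finset.sum_sub_distrib]
    rw [symPart_Gmat_zero_succ bh x' (hZhskew x₁ hx₁),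
      symPart_Gmat_zero_succ bc x' (hZcskew x₁ hx₁)]
    linarith [hiv x₁ hx₁ x' hx' j]
  · rw [symPart_Gmat_succ_succ bh x' (hZhskew x₁ hx₁),
      symPart_Gmat_succ_succ bc x' (hZcskew x₁ hx₁)]
    linarith [hv x₁ hx₁ x' hx' i j]

/-- (Smooth version of Proposition 3.6: invariance of the
limiting functional under an infinitesimal change of framed geodesic.) -/
theorem Ifun_invariance (m : ℕ) (hm : 1 ≤ m) (L : ℝ) (hL : 0 < L)
    (R Rt : ℝ → Fin (m+1) → Fin (m+1) → Fin (m+1) → Fin (m+1) → ℝ)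
    (hRcont : ContinuousOn R (Icc (-L) L)) (hRtcont : ContinuousOn Rt (Icc (-L) L))
    (hRtsymm : ∀ x₁ ∈ Icc (-L) L, CurvSymm (Rt x₁))
    -- the two smooth data tuples
    (wh wc : ℝ → ℝ) (yh yc : ℝ → EuclideanSpace ℝ (Fin m))
    (Zh Zc : ℝ → Fin m → Fin m → ℝ)
    (bh bc : ℝ × EuclideanSpace ℝ (Fin m) → Fin (m+1) → ℝ)
    (hwh : ContDiffOn ℝ (⊤ : ℕ∞) wh (Ioo (-L) L))
    (hwc : ContDiffOn ℝ (⊤ : ℕ∞) wc (Ioo (-L) L))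
    (hyh : ContDiffOn ℝ (⊤ : ℕ∞) yh (Ioo (-L) L))
    (hyc : ContDiffOn ℝ (⊤ : ℕ∞) yc (Ioo (-L) L))
    (hZh : ContDiffOn ℝ (⊤ : ℕ∞) Zh (Ioo (-L) L))
    (hZc : ContDiffOn ℝ (⊤ : ℕ∞) Zc (Ioo (-L) L))
    (hZhskew : ∀ x₁ ∈ Ioo (-L) L, ∀ i j, Zh x₁ j i = - Zh x₁ i j)
    (hZcskew : ∀ x₁ ∈ Ioo (-L) L, ∀ i j, Zc x₁ j i = - Zc x₁ i j)
    (hbh : ContDiffOn ℝ (⊤ : ℕ∞) bh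
      (Ioo (-L) L ×ˢ Metric.ball (0 : EuclideanSpace ℝ (Fin m)) 1))
    (hbc : ContDiffOn ℝ (⊤ : ℕ∞) bc
      (Ioo (-L) L ×ˢ Metric.ball (0 : EuclideanSpace ℝ (Fin m)) 1))
    -- the infinitesimal change of framed geodesic
    (Jf : ℝ → Fin (m+1) → ℝ) (B : ℝ → Fin (m+1) → Fin (m+1) → ℝ)
    (hJsmooth : ContDiffOn ℝ (⊤ : ℕ∞) Jf (Ioo (-L) L))
    (hBsmooth : ContDiffOn ℝ (⊤ : ℕ∞) B (Ioo (-L) L))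
    (hBskew : ∀ x₁ ∈ Ioo (-L) L, ∀ a b, B x₁ b a = - B x₁ a b)
    (hJ1 : ∀ x₁ ∈ Ioo (-L) L, Jf x₁ 0 = 0)
    (hBe1 : ∀ x₁ ∈ Ioo (-L) L, ∀ a, B x₁ a 0 = deriv (fun s => Jf s a) x₁)
    (hBode : ∀ x₁ ∈ Ioo (-L) L, ∀ a b,
      deriv (fun s => B s a b) x₁ = - ∑ k, Rt x₁ a b k 0 * Jf x₁ k)
    -- conditions (i)–(v)
    (hi : ∀ x₁ ∈ Ioo (-L) L, ∀ j l : Fin m, Zh x₁ j l = Zc x₁ j l + B x₁ j.succ l.succ)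
    (hii : ∀ x₁ ∈ Ioo (-L) L, ∀ j : Fin m, yh x₁ j = yc x₁ j + Jf x₁ j.succ)
    (hiii : ∀ x₁ ∈ Ioo (-L) L,
      deriv wh x₁ + Tmat (Rt x₁) (yh x₁) 0 0
        = deriv wc x₁ + Tmat (Rt x₁) (yc x₁) 0 0
          + (1/2) * (matSq (Amat yh Zh x₁) 0 0 - matSq (Amat yc Zc x₁) 0 0))
    (hiv : ∀ x₁ ∈ Ioo (-L) L, ∀ x' ∈ Metric.ball (0 : EuclideanSpace ℝ (Fin m)) 1,
      ∀ j : Fin m,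
      pd bh 0 j (x₁, x') + 2 * Tmat (Rt x₁) (yh x₁ + x') 0 j.succ
        = pd bc 0 j (x₁, x') + 2 * Tmat (Rt x₁) (yc x₁ + x') 0 j.succ
          + (∑ l, deriv (fun s => Zc s j l - Zh s j l) x₁ * x' l)
          + (matSq (Amat yh Zh x₁) 0 j.succ - matSq (Amat yc Zc x₁) 0 j.succ))
    (hv : ∀ x₁ ∈ Ioo (-L) L, ∀ x' ∈ Metric.ball (0 : EuclideanSpace ℝ (Fin m)) 1,
      ∀ j l : Fin m,
      (pd bh j.succ l (x₁, x') + pd bh l.succ j (x₁, x')) / 2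
          + Tmat (Rt x₁) (yh x₁ + x') j.succ l.succ
        = (pd bc j.succ l (x₁, x') + pd bc l.succ j (x₁, x')) / 2
          + Tmat (Rt x₁) (yc x₁ + x') j.succ l.succ
          + (1/2) * (matSq (Amat yh Zh x₁) j.succ l.succ
              - matSq (Amat yc Zc x₁) j.succ l.succ)) :
    Ifun L R Rt wh yh Zh bh = Ifun L R Rt wc yc Zc bc :=
  Ifun_invariance_general m L R Rt hRtsymm wh wc yh yc Zh Zc bh bc hyc hZh hZc hZhskew hZcskew Jf B
    hJsmooth hBsmooth hJ1 hBe1 hBode hii hiii hiv hv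
end
end

section
/- (Quantitative core of Proposition 6.1: uniform closeness of Lipschitz maps agreeing off a small set.) Let n ≥ 2 be an integer and let l, K > 0. There exist constants C > 0 and h₀ > 0, depending only on n, l and K, with the following property: for every L > 0, every h with 0 < h ≤ min(h₀, L), every metric space (Y, d), and every pair of maps f, g : Ω_h → Y which are each Lipschitz with constant l and satisfy 𝓛ⁿ({x ∈ Ω_h : f(x) ≠ g(x)}) ≤ K h^{n+3}, one has sup_{x ∈ Ω_h} d(f(x), g(x)) ≤ C h^{1+3/n}. -/
open MeasureTheory Set

noncomputable section

/-- The thin tube `Ω_h = (−L,L) × B_h(0) ⊂ ℝ × ℝ^m` (so the ambient dimension is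
`n = m + 1`). -/
def Tube (m : ℕ) (L h : ℝ) : Set (ℝ × EuclideanSpace ℝ (Fin m)) :=
  Ioo (-L) L ×ˢ Metric.ball (0 : EuclideanSpace ℝ (Fin m)) h

/-- The Euclidean distance on `ℝ × ℝ^m = ℝ^{m+1}`. -/
def prodDist {m : ℕ} (x y : ℝ × EuclideanSpace ℝ (Fin m)) : ℝ :=
  Real.sqrt ((x.1 - y.1) ^ 2 + ‖x.2 - y.2‖ ^ 2)

/-! Every point `x` of `Ω_h` lies within distance `√2 r` of a box `(a, a + r) × B_{r/2}(w) ⊆ Ω_h`,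
as long as `r ≤ min(h, L)`; the box has volume `c r^n`. With `r = A h^{1 + 3/n}` and `A` chosen so
that `c r^n = 2 K h^{n+3}`, the box cannot lie inside `{f ≠ g}`, so `f y = g y` for some `y` in it,
and `d(f x, g x) ≤ d(f x, f y) + d(g y, g x) ≤ 2√2 l r`. The bound `h ≤ h₀` is exactly `r ≤ h`. -/

lemma prodDist_comm {m : ℕ} (x y : ℝ × EuclideanSpace ℝ (Fin m)) :
    prodDist x y = prodDist y x := by
  rw [prodDist, prodDist, norm_sub_rev, ← sq_abs, abs_sub_comm, sq_abs]

lemma prodDist_le_of_abs_le_of_norm_le {m : ℕ} {x y : ℝ × EuclideanSpace ℝ (Fin m)} {r : ℝ}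
    (h1 : |x.1 - y.1| ≤ r) (h2 : ‖x.2 - y.2‖ ≤ r) :
    prodDist x y ≤ Real.sqrt 2 * r := by
  have hr : 0 ≤ r := (abs_nonneg _).trans h1
  have e1 : (x.1 - y.1) ^ 2 ≤ r ^ 2 := sq_le_sq' (abs_le.mp h1).1 (abs_le.mp h1).2
  have e2 : ‖x.2 - y.2‖ ^ 2 ≤ r ^ 2 := pow_le_pow_left₀ (norm_nonneg _) h2 2
  calc prodDist x y ≤ Real.sqrt (2 * r ^ 2) := Real.sqrt_le_sqrt (by linarith)
    _ = Real.sqrt 2 * r := by rw [Real.sqrt_mul zero_le_two, Real.sqrt_sq hr]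

lemma exists_Ioo_subset_Ioo_inter_closedBall {b c t r : ℝ} (ht : t ∈ Ioo b c) (hr : r ≤ c - b) :
    ∃ a, Ioo a (a + r) ⊆ Ioo b c ∩ Metric.closedBall t r := by
  refine ⟨max b (t - r), fun s hs => ?_⟩
  rw [Real.closedBall_eq_Icc]
  grind

lemma exists_ball_subset_ball_inter_closedBall {E : Type*} [NormedAddCommGroup E] [NormedSpace ℝ E]
    {x : E} {h r : ℝ} (hx : x ∈ Metric.ball 0 h) (hr : 0 < r) (hrh : r ≤ h) :
    ∃ w, Metric.ball w (r / 2) ⊆ Metric.ball 0 h ∩ Metric.closedBall x r := by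
  rw [mem_ball_zero_iff] at hx
  have hh : 0 < h := hr.trans_le hrh
  have hcoef : 0 ≤ 1 - r / (2 * h) := by
    rw [sub_nonneg, div_le_one (by positivity)]
    linarith
  refine ⟨(1 - r / (2 * h)) • x, subset_inter (Metric.ball_subset_ball' ?_)
    (Metric.ball_subset_closedBall.trans (Metric.closedBall_subset_closedBall' ?_))⟩
  · rw [dist_zero_right, norm_smul, Real.norm_of_nonneg hcoef]
    calc r / 2 + (1 - r / (2 * h)) * ‖x‖ ≤ r / 2 + (1 - r / (2 * h)) * h := by gcongr
      _ = h := by field_simp; ring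
  · have : (1 - r / (2 * h)) • x - x = (-(r / (2 * h))) • x := by module
    rw [dist_eq_norm, this, norm_smul, norm_neg, Real.norm_of_nonneg (by positivity)]
    calc r / 2 + r / (2 * h) * ‖x‖ ≤ r / 2 + r / (2 * h) * h := by gcongr
      _ = r := by field_simp; ring

/-- `vol((a, a + r) × B_{r/2}(w)) / r^(m+1)` in `ℝ × ℝ^m`. -/
def boxVolumeRatio (m : ℕ) : ℝ :=
  (volume (Metric.ball (0 : EuclideanSpace ℝ (Fin m)) 1)).toReal / 2 ^ m

lemma boxVolumeRatio_pos (m : ℕ) : 0 < boxVolumeRatio m :=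
  div_pos (ENNReal.toReal_pos (Metric.measure_ball_pos _ _ one_pos).ne' measure_ball_lt_top.ne)
    (by positivity)

lemma volume_Ioo_prod_ball {m : ℕ} (a : ℝ) (w : EuclideanSpace ℝ (Fin m)) {r : ℝ} (hr : 0 < r) :
    volume (Ioo a (a + r) ×ˢ Metric.ball w (r / 2)) =
      ENNReal.ofReal (boxVolumeRatio m * r ^ (m + 1)) := by
  rw [Measure.volume_eq_prod, Measure.prod_prod, Real.volume_Ioo, add_sub_cancel_left,
    Measure.addHaar_ball_of_pos _ _ (half_pos hr), finrank_euclideanSpace_fin,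
    ← ENNReal.ofReal_toReal measure_ball_lt_top.ne, ← ENNReal.ofReal_mul (by positivity),
    ← ENNReal.ofReal_mul hr.le, boxVolumeRatio]
  congr 1
  rw [div_pow]
  field_simp
  ring

lemma exists_box_subset_tube_near {m : ℕ} {L h r : ℝ} {x : ℝ × EuclideanSpace ℝ (Fin m)}
    (hx : x ∈ Tube m L h) (hr : 0 < r) (hrh : r ≤ h) (hrL : r ≤ L) :
    ∃ S ⊆ Tube m L h, volume S = ENNReal.ofReal (boxVolumeRatio m * r ^ (m + 1)) ∧
      ∀ y ∈ S, prodDist x y ≤ Real.sqrt 2 * r := by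
  obtain ⟨a, ha⟩ := exists_Ioo_subset_Ioo_inter_closedBall hx.1 (by linarith : r ≤ L - -L)
  obtain ⟨w, hw⟩ := exists_ball_subset_ball_inter_closedBall hx.2 hr hrh
  refine ⟨Ioo a (a + r) ×ˢ Metric.ball w (r / 2), prod_mono (fun _ hs => (ha hs).1)
    (fun _ hz => (hw hz).1), volume_Ioo_prod_ball a w hr, fun y hy => ?_⟩
  rw [prodDist_comm]
  refine prodDist_le_of_abs_le_of_norm_le ?_ ?_
  · exact Metric.mem_closedBall.mp (ha hy.1).2
  · exact (dist_eq_norm _ _).symm.trans_le (Metric.mem_closedBall.mp (hw hy.2).2)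

lemma exists_eq_of_measure_lt {α β : Type*} [MeasurableSpace α] {μ : Measure α} {f g : α → β}
    {S T : Set α} (hST : S ⊆ T) (hμ : μ {x ∈ T | f x ≠ g x} < μ S) : ∃ y ∈ S, f y = g y := by
  by_contra! hne
  exact (measure_mono (fun y hy => ⟨hST hy, hne y hy⟩ : S ⊆ {x ∈ T | f x ≠ g x})).not_gt hμ

lemma mul_rpow_one_add_le_self {A h n : ℝ} (hA : 0 < A) (hn : 0 < n) (hh : 0 ≤ h)
    (hh₀ : h ≤ (1 / A) ^ (n / 3)) : A * h ^ (1 + 3 / n) ≤ h := by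
  have h3 : h ^ (3 / n) ≤ 1 / A := by
    calc h ^ (3 / n) ≤ ((1 / A) ^ (n / 3)) ^ (3 / n) := by gcongr
      _ = 1 / A := by
        rw [← Real.rpow_mul (by positivity), div_mul_div_comm, mul_comm n,
          div_self (by positivity), Real.rpow_one]
  rcases hh.eq_or_lt with rfl | hh
  · rw [Real.zero_rpow (by positivity), mul_zero]
  calc A * h ^ (1 + 3 / n) = h * (A * h ^ (3 / n)) := by rw [Real.rpow_add hh, Real.rpow_one]; ring
    _ ≤ h * (A * (1 / A)) := by gcongr
    _ = h := by field_simp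

lemma rpow_one_add_three_div_pow {h : ℝ} (hh : 0 ≤ h) (m : ℕ) :
    (h ^ (1 + 3 / ((m : ℝ) + 1))) ^ (m + 1) = h ^ (m + 1 + 3) := by
  rw [← Real.rpow_mul_natCast hh, ← Real.rpow_natCast]
  congr 1
  push_cast
  field_simp

theorem lipschitz_maps_uniformly_close_general (m : ℕ) (l K : ℝ)
    (hl : 0 < l) (hK : 0 < K) :
    ∃ C : ℝ, 0 < C ∧ ∃ h₀ : ℝ, 0 < h₀ ∧
      ∀ (L h : ℝ), 0 < L → 0 < h → h ≤ min h₀ L →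
        ∀ (Y : Type) [MetricSpace Y], ∀ f g : ℝ × EuclideanSpace ℝ (Fin m) → Y,
          (∀ x ∈ Tube m L h, ∀ y ∈ Tube m L h, dist (f x) (f y) ≤ l * prodDist x y) →
          (∀ x ∈ Tube m L h, ∀ y ∈ Tube m L h, dist (g x) (g y) ≤ l * prodDist x y) →
          volume {x ∈ Tube m L h | f x ≠ g x} ≤ ENNReal.ofReal (K * h ^ (m + 1 + 3)) →
          ∀ x ∈ Tube m L h,
            dist (f x) (g x) ≤ C * h ^ ((1 : ℝ) + 3 / ((m : ℝ) + 1)) := by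
  have hc := boxVolumeRatio_pos m
  set A := (2 * K / boxVolumeRatio m) ^ (1 / ((m : ℝ) + 1))
  have hA : 0 < A := by positivity
  have hApow : boxVolumeRatio m * A ^ (m + 1) = 2 * K := by
    rw [← Real.rpow_natCast, ← Real.rpow_mul (by positivity)]
    push_cast
    rw [one_div_mul_cancel (by positivity), Real.rpow_one]
    field_simp
  refine ⟨2 * Real.sqrt 2 * l * A, by positivity, (1 / A) ^ (((m : ℝ) + 1) / 3), by positivity, ?_⟩
  intro L h hL hh hmin Y _ f g hf hg hvol x hx
  set r := A * h ^ (1 + 3 / ((m : ℝ) + 1))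
  have hrh : r ≤ h :=
    mul_rpow_one_add_le_self hA (by positivity) hh.le (hmin.trans (min_le_left _ _))
  obtain ⟨S, hST, hSvol, hSnear⟩ :=
    exists_box_subset_tube_near hx (by positivity) hrh (hrh.trans (hmin.trans (min_le_right _ _)))
  have hvolS : volume {x ∈ Tube m L h | f x ≠ g x} < volume S := by
    refine hvol.trans_lt ?_
    rw [hSvol, ENNReal.ofReal_lt_ofReal_iff_of_nonneg (by positivity), mul_pow,
      rpow_one_add_three_div_pow hh.le, ← mul_assoc, hApow]
    linarith [mul_pos hK (pow_pos hh (m + 1 + 3))]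
  obtain ⟨y, hyS, hfy⟩ := exists_eq_of_measure_lt hST hvolS
  have hxy := hSnear y hyS
  calc dist (f x) (g x) ≤ dist (f x) (f y) + dist (g y) (g x) := hfy ▸ dist_triangle _ _ _
    _ ≤ l * prodDist x y + l * prodDist y x :=
        add_le_add (hf x hx y (hST hyS)) (hg y (hST hyS) x hx)
    _ ≤ l * (Real.sqrt 2 * r) + l * (Real.sqrt 2 * r) := by rw [prodDist_comm y x]; gcongr
    _ = 2 * Real.sqrt 2 * l * A * h ^ ((1 : ℝ) + 3 / ((m : ℝ) + 1)) := by ring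

/-- (Quantitative core of Proposition 6.1: uniform closeness of
Lipschitz maps agreeing off a small set.)  Here the ambient dimension is
`n = m + 1 ≥ 2`; the constants `C`, `h₀` depend only on `n`, `l` and `K`. -/
theorem lipschitz_maps_uniformly_close (m : ℕ) (hm : 1 ≤ m) (l K : ℝ)
    (hl : 0 < l) (hK : 0 < K) :
    ∃ C : ℝ, 0 < C ∧ ∃ h₀ : ℝ, 0 < h₀ ∧
      ∀ (L h : ℝ), 0 < L → 0 < h → h ≤ min h₀ L →
        ∀ (Y : Type) [MetricSpace Y], ∀ f g : ℝ × EuclideanSpace ℝ (Fin m) → Y,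
          (∀ x ∈ Tube m L h, ∀ y ∈ Tube m L h, dist (f x) (f y) ≤ l * prodDist x y) →
          (∀ x ∈ Tube m L h, ∀ y ∈ Tube m L h, dist (g x) (g y) ≤ l * prodDist x y) →
          volume {x ∈ Tube m L h | f x ≠ g x} ≤ ENNReal.ofReal (K * h ^ (m + 1 + 3)) →
          ∀ x ∈ Tube m L h,
            dist (f x) (g x) ≤ C * h ^ ((1 : ℝ) + 3 / ((m : ℝ) + 1)) :=
  lipschitz_maps_uniformly_close_general m l K hl hK
end
end

section
/- (Euclidean core of Lemma 3.8: Gronwall estimate for a second-order differential inequality with jumps in the derivative.) Let d ≥ 1 be an integer, C ≥ 1, J ∈ ℕ, and 0 = t₀ < t₁ < … < t_J. Let z : [0,∞) → ℝ^d be continuous and suppose that on each of the intervals [t_j, t_{j+1}] (j = 0,…,J−1) and [t_J, ∞) the restriction of z is twice continuously differentiable (with one-sided derivatives at the endpoints) and satisfies ‖z''(t)‖ ≤ C‖z(t)‖ in the interior. Let F₀, F₁, …, F_J ≥ 0 be such that (‖z(0)‖² + ‖z'(0⁺)‖²)^{1/2} ≤ F₀ and ‖z'(t_j⁺) − z'(t_j⁻)‖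 ≤ F_j for j = 1,…,J, where z'(t_j⁻) and z'(t_j⁺) denote the one-sided derivatives at t_j from the left and right pieces. Then for every t ≥ 0, ‖z(t)‖ ≤ e^{Ct} F₀ + Σ_{j ≥ 1, t_j ≤ t} e^{C(t − t_j)} F_j. -/
/-!
On each piece the phase vector `(z, z')`, normed by `max ‖z‖ ‖z'‖`, satisfies
`‖(z, z')'‖ = max ‖z'‖ ‖z''‖ ≤ C ‖(z, z')‖` because `1 ≤ C`, so by Grönwall its norm grows at
most by the factor `exp (C Δt)` along a piece. At a node only `z'` jumps, so the norm increases
by at most `F j`. Starting from `max ‖z 0‖ ‖z' 0‖ ≤ √(‖z 0‖² + ‖z' 0‖²) ≤ F 0` and chaining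
these two estimates over the nodes gives the bound.
-/

open Real Set

section Phase

variable {E : Type*} [NormedAddCommGroup E] [NormedSpace ℝ E]

noncomputable def phase (Φ : ℝ → E) (s : ℝ) : E × E := (Φ s, deriv Φ s)

lemma hasDerivAt_phase {Φ : ℝ → E} (hΦ : ContDiff ℝ 2 Φ) (s : ℝ) :
    HasDerivAt (phase Φ) (deriv Φ s, iteratedDeriv 2 Φ s) s := by
  have hΦ' : ContDiff ℝ 1 (deriv Φ) := (contDiff_succ_iff_deriv (n := 1)).mp hΦ |>.2.2
  rw [iteratedDeriv_succ, iteratedDeriv_one]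
  exact ((hΦ.differentiable two_ne_zero s).hasDerivAt).prodMk
    (hΦ'.differentiable one_ne_zero s).hasDerivAt

lemma norm_phase_le_add_norm_sub_deriv {Φ Ψ : ℝ → E} {s : ℝ} (h : Ψ s = Φ s) :
    ‖phase Ψ s‖ ≤ ‖phase Φ s‖ + ‖deriv Ψ s - deriv Φ s‖ := by
  have hsplit : phase Ψ s = phase Φ s + (0, deriv Ψ s - deriv Φ s) := by
    simp [phase, h]
  rw [hsplit]
  exact (norm_add_le _ _).trans_eq (by simp)

lemma norm_phase_le_sqrt (Φ : ℝ → E) (s : ℝ) :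
    ‖phase Φ s‖ ≤ √(‖Φ s‖ ^ 2 + ‖deriv Φ s‖ ^ 2) :=
  max_le (le_sqrt_of_sq_le (le_add_of_nonneg_right (sq_nonneg _)))
    (le_sqrt_of_sq_le (le_add_of_nonneg_left (sq_nonneg _)))

lemma norm_phase_le_exp_mul {Φ : ℝ → E} (hΦ : ContDiff ℝ 2 Φ) {C a b : ℝ} (hC : 1 ≤ C)
    (hbound : ∀ s ∈ Ioo a b, ‖iteratedDeriv 2 Φ s‖ ≤ C * ‖Φ s‖) :
    ∀ s ∈ Icc a b, ‖phase Φ s‖ ≤ exp (C * (s - a)) * ‖phase Φ a‖ := by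
  have hcont : Continuous (phase Φ) :=
    continuous_iff_continuousAt.2 fun s => (hasDerivAt_phase hΦ s).continuousAt
  have hbound_Ico : ∀ s ∈ Ico a b, ‖iteratedDeriv 2 Φ s‖ ≤ C * ‖Φ s‖ := by
    intro s hs
    have hclosed : IsClosed {x | ‖iteratedDeriv 2 Φ x‖ ≤ C * ‖Φ x‖} :=
      isClosed_le (hΦ.continuous_iteratedDeriv 2 le_rfl).norm
        (continuous_const.mul (hΦ.continuous.norm))
    refine hclosed.closure_subset_iff.2 hbound ?_
    rw [closure_Ioo (hs.1.trans_lt hs.2).ne]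
    exact Ico_subset_Icc_self hs
  have hgrowth : ∀ x ∈ Ico a b, ‖(deriv Φ x, iteratedDeriv 2 Φ x)‖ ≤ C * ‖phase Φ x‖ + 0 := by
    intro x hx
    rw [add_zero, Prod.norm_def, phase, Prod.norm_def]
    exact max_le ((le_max_right _ _).trans (le_mul_of_one_le_left (by positivity) hC))
      ((hbound_Ico x hx).trans (mul_le_mul_of_nonneg_left (le_max_left _ _) (by linarith)))
  intro s hs
  have := norm_le_gronwallBound_of_norm_deriv_right_le hcont.continuousOn
    (fun x _ => (hasDerivAt_phase hΦ x).hasDerivWithinAt) le_rfl hgrowth s hs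
  rwa [gronwallBound_ε0, mul_comm] at this

end Phase

noncomputable def jumpBound (C : ℝ) (t F : ℕ → ℝ) (s : ℝ) (j : ℕ) : ℝ :=
  exp (C * s) * F 0 + ∑ i ∈ Finset.Icc 1 j, exp (C * (s - t i)) * F i

lemma jumpBound_zero (C : ℝ) (t F : ℕ → ℝ) (s : ℝ) : jumpBound C t F s 0 = exp (C * s) * F 0 := by
  simp [jumpBound]

lemma exp_mul_jumpBound (C : ℝ) (t F : ℕ → ℝ) (r s : ℝ) (j : ℕ) :
    exp (C * (s - r)) * jumpBound C t F r j = jumpBound C t F s j := by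
  simp only [jumpBound, mul_add, Finset.mul_sum, ← mul_assoc, ← exp_add]
  ring_nf

lemma jumpBound_succ_self (C : ℝ) (t F : ℕ → ℝ) (j : ℕ) :
    jumpBound C t F (t (j + 1)) (j + 1) = jumpBound C t F (t (j + 1)) j + F (j + 1) := by
  simp [jumpBound, Finset.sum_Icc_succ_top, add_assoc]

lemma jumpBound_le_sum {C : ℝ} {t F : ℕ → ℝ} {s : ℝ} {j J : ℕ} (hjJ : j ≤ J)
    (ht : ∀ i ≤ j, t i ≤ s) (hF : ∀ i ≤ J, 0 ≤ F i) :
    jumpBound C t F s j ≤ exp (C * s) * F 0 +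
      ∑ i ∈ (Finset.Icc 1 J).filter (fun i => t i ≤ s), exp (C * (s - t i)) * F i := by
  refine add_le_add_right (Finset.sum_le_sum_of_subset_of_nonneg ?_ ?_) _
  · intro i hi
    have hi' := Finset.mem_Icc.1 hi
    exact Finset.mem_filter.2 ⟨Finset.mem_Icc.2 ⟨hi'.1, hi'.2.trans hjJ⟩, ht i hi'.2⟩
  · intro i hi _
    exact mul_nonneg (exp_pos _).le (hF i (Finset.mem_Icc.1 (Finset.mem_filter.1 hi).1).2)

lemma exists_mem_Ico_of_le_of_lt {α : Type*} [LinearOrder α] {t : ℕ → α} {s : α}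
    (h0 : t 0 ≤ s) : ∀ {J : ℕ}, s < t J → ∃ j < J, s ∈ Ico (t j) (t (j + 1))
  | 0, hJ => absurd h0 (not_le.2 hJ)
  | J + 1, hJ => by
    by_cases hs : s < t J
    · obtain ⟨j, hj, hjs⟩ := exists_mem_Ico_of_le_of_lt h0 hs
      exact ⟨j, hj.trans J.lt_succ_self, hjs⟩
    · exact ⟨J, J.lt_succ_self, not_lt.1 hs, hJ⟩

section Pieces

variable {E : Type*} [NormedAddCommGroup E] [NormedSpace ℝ E] {C : ℝ} {t F : ℕ → ℝ}

lemma norm_phase_le_jumpBound_of_mem_Icc {Φ : ℝ → E} (hΦ : ContDiff ℝ 2 Φ) (hC : 1 ≤ C)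
    {j : ℕ} {b : ℝ} (hbound : ∀ s ∈ Ioo (t j) b, ‖iteratedDeriv 2 Φ s‖ ≤ C * ‖Φ s‖)
    (hnode : ‖phase Φ (t j)‖ ≤ jumpBound C t F (t j) j) :
    ∀ s ∈ Icc (t j) b, ‖phase Φ s‖ ≤ jumpBound C t F s j := fun s hs =>
  calc ‖phase Φ s‖ ≤ exp (C * (s - t j)) * ‖phase Φ (t j)‖ :=
        norm_phase_le_exp_mul hΦ hC hbound s hs
    _ ≤ exp (C * (s - t j)) * jumpBound C t F (t j) j := by gcongr
    _ = jumpBound C t F s j := exp_mul_jumpBound C t F (t j) s j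

lemma norm_phase_node_le_jumpBound {Φ : ℕ → ℝ → E} {J : ℕ} (hC : 1 ≤ C)
    (hΦ : ∀ j ≤ J, ContDiff ℝ 2 (Φ j)) (ht : ∀ j < J, t j ≤ t (j + 1))
    (hbound : ∀ j < J, ∀ s ∈ Ioo (t j) (t (j + 1)), ‖iteratedDeriv 2 (Φ j) s‖ ≤ C * ‖Φ j s‖)
    (hcont : ∀ j < J, Φ (j + 1) (t (j + 1)) = Φ j (t (j + 1)))
    (hjump : ∀ j < J, ‖deriv (Φ (j + 1)) (t (j + 1)) - deriv (Φ j) (t (j + 1))‖ ≤ F (j + 1))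
    (h0 : ‖phase (Φ 0) (t 0)‖ ≤ jumpBound C t F (t 0) 0) :
    ∀ j ≤ J, ‖phase (Φ j) (t j)‖ ≤ jumpBound C t F (t j) j
  | 0, _ => h0
  | j + 1, hj => by
    have hjJ : j < J := hj
    have hpiece := norm_phase_le_jumpBound_of_mem_Icc (hΦ j hjJ.le) hC (hbound j hjJ)
      (norm_phase_node_le_jumpBound hC hΦ ht hbound hcont hjump h0 j hjJ.le)
      (t (j + 1)) ⟨ht j hjJ, le_rfl⟩
    calc ‖phase (Φ (j + 1)) (t (j + 1))‖
        ≤ ‖phase (Φ j) (t (j + 1))‖ + ‖deriv (Φ (j + 1)) (t (j + 1)) - deriv (Φ j) (t (j + 1))‖ :=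
          norm_phase_le_add_norm_sub_deriv (hcont j hjJ)
      _ ≤ jumpBound C t F (t (j + 1)) j + F (j + 1) := add_le_add hpiece (hjump j hjJ)
      _ = jumpBound C t F (t (j + 1)) (j + 1) := (jumpBound_succ_self C t F j).symm

end Pieces

theorem gronwall_with_jumps_general (d : ℕ) (C : ℝ) (hC : 1 ≤ C) (J : ℕ)
    (t : ℕ → ℝ) (ht0 : t 0 = 0) (htmono : ∀ j < J, t j < t (j + 1))
    (z : ℝ → EuclideanSpace ℝ (Fin d))
    (Φ : ℕ → ℝ → EuclideanSpace ℝ (Fin d))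
    (hΦ : ∀ j ≤ J, ContDiff ℝ 2 (Φ j))
    (hagree : ∀ j < J, ∀ s ∈ Icc (t j) (t (j + 1)), z s = Φ j s)
    (hagreeJ : ∀ s ∈ Ici (t J), z s = Φ J s)
    (hODE : ∀ j < J, ∀ s ∈ Ioo (t j) (t (j + 1)),
      ‖iteratedDeriv 2 (Φ j) s‖ ≤ C * ‖z s‖)
    (hODEJ : ∀ s ∈ Ioi (t J), ‖iteratedDeriv 2 (Φ J) s‖ ≤ C * ‖z s‖)
    (F : ℕ → ℝ) (hF : ∀ j ≤ J, 0 ≤ F j)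
    (hF0 : Real.sqrt (‖z 0‖ ^ 2 + ‖deriv (Φ 0) 0‖ ^ 2) ≤ F 0)
    (hjump : ∀ j, 1 ≤ j → j ≤ J →
      ‖deriv (Φ j) (t j) - deriv (Φ (j - 1)) (t j)‖ ≤ F j) :
    ∀ s : ℝ, 0 ≤ s →
      ‖z s‖ ≤ Real.exp (C * s) * F 0 +
        ∑ j ∈ (Finset.Icc 1 J).filter (fun j => t j ≤ s),
          Real.exp (C * (s - t j)) * F j := by
  have hzΦ : ∀ j ≤ J, z (t j) = Φ j (t j) := fun j hj => hj.lt_or_eq.elim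
    (fun hj => hagree j hj _ ⟨le_rfl, (htmono j hj).le⟩) (fun hj => hj ▸ hagreeJ _ self_mem_Ici)
  have hbound : ∀ j < J, ∀ s ∈ Ioo (t j) (t (j + 1)), ‖iteratedDeriv 2 (Φ j) s‖ ≤ C * ‖Φ j s‖ :=
    fun j hj s hs => hagree j hj s (Ioo_subset_Icc_self hs) ▸ hODE j hj s hs
  have hinit : ‖phase (Φ 0) (t 0)‖ ≤ jumpBound C t F (t 0) 0 := by
    have hz0 : z 0 = Φ 0 0 := ht0 ▸ hzΦ 0 J.zero_le
    rw [jumpBound_zero, ht0, mul_zero, exp_zero, one_mul]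
    exact (norm_phase_le_sqrt (Φ 0) 0).trans (hz0 ▸ hF0)
  have hnode := norm_phase_node_le_jumpBound hC hΦ (fun j hj => (htmono j hj).le) hbound
    (fun j hj => (hzΦ (j + 1) hj).symm.trans (hagree j hj _ ⟨(htmono j hj).le, le_rfl⟩))
    (fun j hj => hjump (j + 1) j.succ_pos hj) hinit
  have htmonoOn : MonotoneOn t (Iic J) := (strictMonoOn_Iic_of_lt_succ htmono).monotoneOn
  intro s hs
  obtain ⟨j, hjJ, hts, hzs⟩ : ∃ j ≤ J, t j ≤ s ∧ ‖z s‖ ≤ jumpBound C t F s j := by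
    by_cases hsJ : t J ≤ s
    · refine ⟨J, le_rfl, hsJ, hagreeJ s hsJ ▸ (norm_fst_le (phase (Φ J) s)).trans ?_⟩
      exact norm_phase_le_jumpBound_of_mem_Icc (hΦ J le_rfl) hC
        (fun x hx => hagreeJ x hx.1.le ▸ hODEJ x hx.1) (hnode J le_rfl) s ⟨hsJ, le_rfl⟩
    · obtain ⟨j, hj, hsj⟩ := exists_mem_Ico_of_le_of_lt (ht0 ▸ hs) (not_le.1 hsJ)
      refine ⟨j, hj.le, hsj.1,
        hagree j hj s (Ico_subset_Icc_self hsj) ▸ (norm_fst_le (phase (Φ j) s)).trans ?_⟩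
      exact norm_phase_le_jumpBound_of_mem_Icc (hΦ j hj.le) hC (hbound j hj) (hnode j hj.le) s
        (Ico_subset_Icc_self hsj)
  exact hzs.trans (jumpBound_le_sum hjJ
    (fun i hi => (htmonoOn (hi.trans hjJ) hjJ hi).trans hts) hF)

/-- (Euclidean core of Lemma 3.8: Gronwall estimate for a
second-order differential inequality with jumps in the derivative.)

The piecewise-C² structure of `z` is encoded by C² extensions `Φ j : ℝ → ℝ^d`
of the restrictions of `z` to the closed subintervals `[t_j, t_{j+1}]`
(`j = 0, …, J−1`) and `[t_J, ∞)`; one-sided derivatives of `z` at the nodes are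
the derivatives of these extensions. -/
theorem gronwall_with_jumps (d : ℕ) (hd : 1 ≤ d) (C : ℝ) (hC : 1 ≤ C) (J : ℕ)
    (t : ℕ → ℝ) (ht0 : t 0 = 0) (htmono : ∀ j < J, t j < t (j + 1))
    (z : ℝ → EuclideanSpace ℝ (Fin d)) (hz : ContinuousOn z (Ici 0))
    (Φ : ℕ → ℝ → EuclideanSpace ℝ (Fin d))
    (hΦ : ∀ j ≤ J, ContDiff ℝ 2 (Φ j))
    (hagree : ∀ j < J, ∀ s ∈ Icc (t j) (t (j + 1)), z s = Φ j s)
    (hagreeJ : ∀ s ∈ Ici (t J), z s = Φ J s)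
    (hODE : ∀ j < J, ∀ s ∈ Ioo (t j) (t (j + 1)),
      ‖iteratedDeriv 2 (Φ j) s‖ ≤ C * ‖z s‖)
    (hODEJ : ∀ s ∈ Ioi (t J), ‖iteratedDeriv 2 (Φ J) s‖ ≤ C * ‖z s‖)
    (F : ℕ → ℝ) (hF : ∀ j ≤ J, 0 ≤ F j)
    (hF0 : Real.sqrt (‖z 0‖ ^ 2 + ‖deriv (Φ 0) 0‖ ^ 2) ≤ F 0)
    (hjump : ∀ j, 1 ≤ j → j ≤ J →
      ‖deriv (Φ j) (t j) - deriv (Φ (j - 1)) (t j)‖ ≤ F j) :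
    ∀ s : ℝ, 0 ≤ s →
      ‖z s‖ ≤ Real.exp (C * s) * F 0 +
        ∑ j ∈ (Finset.Icc 1 J).filter (fun j => t j ≤ s),
          Real.exp (C * (s - t j)) * F j :=
  gronwall_with_jumps_general d C hC J t ht0 htmono z Φ hΦ hagree hagreeJ hODE hODEJ F hF hF0 hjump
end

section
/- (Algebraic lemma from the proof of Corollary 5.2.) Let n ≥ 2 and let A = (A_{ijkl})_{i,j,k,l=1..n} be a 4-tensor of real numbers with the curvature symmetries. Suppose that for all m, j, l ∈ {2,…,n} one has A_{1mjl} + A_{1ljm} − A_{1jml} − A_{1lmj} = 0. Then A_{1mjl} = 0 for all m, j, l ∈ {2,…,n}. -/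
noncomputable section

/-- (Algebraic lemma from the proof of Corollary 5.2.)
The ambient dimension is `n = m+1 ≥ 2`; the index `0 : Fin (m+1)` plays the
role of the index `1` of the paper and `p.succ` the role of a primed index
`∈ {2,…,n}`.  If a 4-tensor with the curvature symmetries satisfies
`A_{1mjl} + A_{1ljm} − A_{1jml} − A_{1lmj} = 0` for all primed `m, j, l`, then
`A_{1mjl} = 0` for all primed `m, j, l`. -/
theorem algebraic_lemma (m : ℕ) (hm : 1 ≤ m)
    (A : Fin (m+1) → Fin (m+1) → Fin (m+1) → Fin (m+1) → ℝ) (hA : CurvSymm A)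
    (h : ∀ p j l : Fin m,
      A 0 p.succ j.succ l.succ + A 0 l.succ j.succ p.succ
        - A 0 j.succ p.succ l.succ - A 0 l.succ p.succ j.succ = 0) :
    ∀ p j l : Fin m, A 0 p.succ j.succ l.succ = 0 := by
  intro p j l
  obtain ⟨h1, h2, h3, h4⟩ := hA
  have hb := h4 0 j.succ l.succ p.succ
  have hh := h j l p
  have e1 := h2 0 p.succ l.succ j.succ
  have e2 := h2 0 l.succ j.succ p.succ
  linarith
end
end

section
/- (Vanishing of the mixed curvature block when the cubic field is a gradient; 'Q₂ = 0 implies 𝒜′ = 0' from the proof of Corollary 5.2.) Let n ≥ 2 and let A = (A_{ijkl})_{i,j,k,l=1..n} be a 4-tensor of real numbers with the curvature symmetries. Suppose there exists a twice continuously differentiable function b : B₁(0) ⊂ ℝ^{n−1} → ℝ, with the coordinates of ℝ^{n−1} labeled x'_2, …, x'_n, such that for every j ∈ {2,…,n} and every x' ∈ B₁(0): ∂_{x_j} b(x') = (1/3) Σ_{k,l=2}^n A_{1kjl} x'_k x'_l. Then A_{1kjl} = 0 for all j, k, l ∈ {2,…,n}. -/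
/-!
Write `B a c d = A 0 a' c' d'` for the primed block. Since `∂_q b = Q_q` with
`Q_q(x) = ⅓ ∑ B k q l x_k x_l`, symmetry of the Hessian of the `C²` function `b` forces
`∂_r Q_q = ∂_q Q_r`; at `x = ½ e_p` this reads `B p q r + B r q p = B p r q + B q r p`.
With antisymmetry of `B` in its last two slots this gives `2 B p q r = B q r p + B r p q`,
and the first Bianchi identity turns the right-hand side into `-B p q r`, so `B = 0`.
-/

open Filter Topology

theorem eq_zero_of_cyclic_of_symm {ι K : Type*} [Field K] [CharZero K] (B : ι → ι → ι → K)
    (hanti : ∀ i j k, B i j k = -B i k j) (hcyc : ∀ i j k, B i j k + B j k i + B k i j = 0)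
    (hsymm : ∀ i j p, B p i j + B j i p = B p j i + B i j p) (i j k : ι) : B i j k = 0 := by
  have h3 : 3 * B i j k = 0 := by
    linear_combination hsymm j k i + hcyc i j k + hanti i k j - hanti k j i
  simpa using h3

theorem fderiv_fderiv_apply_comm {𝕜 E F : Type*} [RCLike 𝕜] [NormedAddCommGroup E]
    [NormedSpace 𝕜 E] [NormedAddCommGroup F] [NormedSpace 𝕜 F] {f : E → F} {x : E}
    (hf : ContDiffAt 𝕜 2 f x) {v w : E} {g h : E → F}
    (hg : (fun y => fderiv 𝕜 f y v) =ᶠ[𝓝 x] g) (hh : (fun y => fderiv 𝕜 f y w) =ᶠ[𝓝 x] h) :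
    fderiv 𝕜 g x w = fderiv 𝕜 h x v := by
  have hdiff : DifferentiableAt 𝕜 (fderiv 𝕜 f) x :=
    (hf.fderiv_right le_rfl).differentiableAt one_ne_zero
  rw [← hg.fderiv_eq, ← hh.fderiv_eq, fderiv_clm_apply hdiff (differentiableAt_const v),
    fderiv_clm_apply hdiff (differentiableAt_const w)]
  simpa using hf.isSymmSndFDerivAt (by simp) w v

theorem hasFDerivAt_quadForm {𝕜 ι : Type*} [RCLike 𝕜] [Fintype ι] (C : ι → ι → 𝕜)
    (x : EuclideanSpace 𝕜 ι) :
    HasFDerivAt (fun y : EuclideanSpace 𝕜 ι => ∑ k, ∑ l, C k l * y k * y l)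
      (∑ k, ∑ l, C k l • (x k • EuclideanSpace.proj (𝕜 := 𝕜) l + x l • EuclideanSpace.proj k))
      x := by
  refine HasFDerivAt.fun_sum fun k _ => HasFDerivAt.fun_sum fun l _ => ?_
  refine ((((EuclideanSpace.proj (𝕜 := 𝕜) k).hasFDerivAt (x := x)).const_mul (C k l)).fun_mul
    (EuclideanSpace.proj (𝕜 := 𝕜) l).hasFDerivAt).congr_fderiv ?_
  ext v
  simp
  ring

theorem fderiv_quadForm_single {𝕜 ι : Type*} [RCLike 𝕜] [Fintype ι] [DecidableEq ι]
    (C : ι → ι → 𝕜) (x : EuclideanSpace 𝕜 ι) (r : ι) :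
    fderiv 𝕜 (fun y : EuclideanSpace 𝕜 ι => ∑ k, ∑ l, C k l * y k * y l) x
      (EuclideanSpace.single r 1) = ∑ k, (C k r + C r k) * x k := by
  rw [(hasFDerivAt_quadForm C x).fderiv]
  simp [Finset.sum_add_distrib, add_mul, mul_comm]

theorem mixed_block_vanishes_general (m : ℕ)
    (A : Fin (m+1) → Fin (m+1) → Fin (m+1) → Fin (m+1) → ℝ) (hA : CurvSymm A)
    (b : EuclideanSpace ℝ (Fin m) → ℝ)
    (hb : ContDiffOn ℝ 2 b (Metric.ball 0 1))
    (hgrad : ∀ j : Fin m, ∀ x ∈ Metric.ball (0 : EuclideanSpace ℝ (Fin m)) 1,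
      fderiv ℝ b x (EuclideanSpace.single j 1)
        = (1/3) * ∑ k, ∑ l, A 0 k.succ j.succ l.succ * x k * x l) :
    ∀ j k l : Fin m, A 0 k.succ j.succ l.succ = 0 := by
  obtain ⟨-, hanti, -, hcyc⟩ := hA
  set B : Fin m → Fin m → Fin m → ℝ := fun a c d => A 0 a.succ c.succ d.succ
  have hsymm : ∀ i j p, B p i j + B j i p = B p j i + B i j p := by
    intro i j p
    set x : EuclideanSpace ℝ (Fin m) := (1/2 : ℝ) • EuclideanSpace.single p 1
    have hx : x ∈ Metric.ball 0 1 := by norm_num [x, norm_smul]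
    have hball := Metric.isOpen_ball.mem_nhds hx
    have hgrad_near (q : Fin m) : (fun y => fderiv ℝ b y (EuclideanSpace.single q 1)) =ᶠ[𝓝 x]
        fun y => (1/3) * ∑ k, ∑ l, A 0 k.succ q.succ l.succ * y k * y l :=
      eventually_of_mem hball (hgrad q)
    have h := fderiv_fderiv_apply_comm (hb.contDiffAt hball) (hgrad_near i) (hgrad_near j)
    rw [fderiv_const_mul (hasFDerivAt_quadForm _ x).differentiableAt,
      fderiv_const_mul (hasFDerivAt_quadForm _ x).differentiableAt] at h
    simp only [smul_apply, fderiv_quadForm_single, x, PiLp.smul_apply, PiLp.single_apply,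
      smul_eq_mul, mul_ite, mul_one, mul_zero, Finset.sum_ite_eq', Finset.mem_univ, if_true] at h
    linarith
  intro j k l
  exact eq_zero_of_cyclic_of_symm B (fun _ _ _ => hanti 0 _ _ _) (fun _ _ _ => hcyc 0 _ _ _)
    hsymm k j l

/-- (Vanishing of the mixed curvature block when the cubic
field is a gradient; `Q₂ = 0` implies `𝒜′ = 0`, from the proof of
Corollary 5.2.)  The ambient dimension is `n = m+1 ≥ 2`; the index
`0 : Fin (m+1)` plays the role of the index `1` of the paper and `j.succ` the
role of a primed index `∈ {2,…,n}`. -/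
theorem mixed_block_vanishes (m : ℕ) (hm : 1 ≤ m)
    (A : Fin (m+1) → Fin (m+1) → Fin (m+1) → Fin (m+1) → ℝ) (hA : CurvSymm A)
    (b : EuclideanSpace ℝ (Fin m) → ℝ)
    (hb : ContDiffOn ℝ 2 b (Metric.ball 0 1))
    (hgrad : ∀ j : Fin m, ∀ x ∈ Metric.ball (0 : EuclideanSpace ℝ (Fin m)) 1,
      fderiv ℝ b x (EuclideanSpace.single j 1)
        = (1/3) * ∑ k, ∑ l, A 0 k.succ j.succ l.succ * x k * x l) :
    ∀ j k l : Fin m, A 0 k.succ j.succ l.succ = 0 :=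
  mixed_block_vanishes_general m A hA b hb hgrad
end

section
/- (Saint-Venant rigidity for quadratic symmetrized gradients; 'Q₃ = 0 implies 𝒜″ = 0' from the proof of Corollary 5.2.) Let m ≥ 1 and let S = (S_{ikjl})_{i,k,j,l=1..m} be a 4-tensor of real numbers with the curvature symmetries (antisymmetric in the first pair (i,k), antisymmetric in the second pair (j,l), symmetric under exchange of the two pairs, and satisfying the first Bianchi identity). Suppose there exists a twice continuously differentiable map b : B₁(0) ⊂ ℝ^m → ℝ^m such that for all i, j ∈ {1,…,m} and all x ∈ B₁(0): (1/2)(∂_{x_j} b_i(x) + ∂_{x_i} b_j(x)) = (1/6) Σ_{k,l=1}^m S_{ikjl} x_k x_l. Then S = 0. -/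
/-!
With `e_ij = (∂_j b_i + ∂_i b_j) / 2`, symmetry of second derivatives gives the classical
formula `∂_j ∂_k b_i = ∂_j e_ik + ∂_k e_ij - ∂_i e_jk`. For the quadratic strain
`e_ij = (1/6) Σ S_ikjl x_k x_l` the curvature symmetries reduce it to
`∂_j ∂_k b_i = (1/3) Σ_l (S_ijkl + S_ikjl) x_l`, so `∂_k b_i` has a linear gradient; its matrix
is symmetric by Schwarz again, i.e. `S_ijkl + S_ikjl` is symmetric in `j, l`. Together with the
Bianchi identity this forces `S = 0`.
-/

open Set

noncomputable section

open Filter Topology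

section Calculus

variable {E : Type*} [NormedAddCommGroup E] [NormedSpace ℝ E] {ι : Type*}

theorem fderiv_fderiv_apply_eq_of_symmetrized_fderiv {f : ι → E → ℝ} {ε : ι → ι → E → ℝ}
    {v : ι → E} {x : E} (hf : ∀ i, ContDiffAt ℝ 2 (f i) x)
    (hε : ∀ i j, (fun y => (1/2) * (fderiv ℝ (f i) y (v j) + fderiv ℝ (f j) y (v i)))
      =ᶠ[𝓝 x] ε i j)
    (i j k : ι) :
    fderiv ℝ (fderiv ℝ (f i)) x (v j) (v k)
      = fderiv ℝ (ε i k) x (v j) + fderiv ℝ (ε i j) x (v k) - fderiv ℝ (ε j k) x (v i) := by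
  have hsymm : ∀ i, IsSymmSndFDerivAt ℝ (f i) x := fun i =>
    (hf i).isSymmSndFDerivAt minSmoothness_of_isRCLikeNormedField.le
  have hstrain : ∀ i j w, fderiv ℝ (ε i j) x w
      = (1/2) * (fderiv ℝ (fderiv ℝ (f i)) x w (v j) + fderiv ℝ (fderiv ℝ (f j)) x w (v i)) := by
    intro i j w
    have hd : ∀ i, HasFDerivAt (fderiv ℝ (f i)) (fderiv ℝ (fderiv ℝ (f i)) x) x := fun i =>
      (((hf i).fderiv_right (m := 1) le_rfl).differentiableAt one_ne_zero).hasFDerivAt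
    have hsum := (((hd i).clm_apply (hasFDerivAt_const (v j) x)).fun_add
      ((hd j).clm_apply (hasFDerivAt_const (v i) x))).const_mul (1/2 : ℝ)
    rw [← (hε i j).fderiv_eq, hsum.fderiv]
    simp [mul_add]
  rw [hstrain, hstrain, hstrain, hsymm i (v k) (v j), hsymm k (v i) (v j), hsymm j (v k) (v i)]
  ring

variable [Fintype ι] [DecidableEq ι]

theorem fderiv_quadratic_apply_single (a : ℝ) (c : ι → ι → ℝ) (x : EuclideanSpace ℝ ι) (p : ι) :
    fderiv ℝ (fun y : EuclideanSpace ℝ ι => a * ∑ k, ∑ l, c k l * y k * y l) x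
      (EuclideanSpace.single p 1) = a * ∑ l, (c p l + c l p) * x l := by
  have hcoord : ∀ k, HasFDerivAt (fun y : EuclideanSpace ℝ ι => y k)
      (EuclideanSpace.proj k : EuclideanSpace ℝ ι →L[ℝ] ℝ) x :=
    fun k => (EuclideanSpace.proj (𝕜 := ℝ) k).hasFDerivAt
  rw [((HasFDerivAt.fun_sum fun k _ => HasFDerivAt.fun_sum fun l _ =>
    ((hcoord k).const_mul (c k l)).fun_mul (hcoord l)).const_mul a).fderiv]
  simp [Finset.sum_add_distrib, add_mul, mul_add, mul_comm, add_comm]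

theorem symm_of_eventually_fderiv_apply_single_eq {g : EuclideanSpace ℝ ι → ℝ}
    {x : EuclideanSpace ℝ ι} (T : ι → ι → ℝ)
    (hg : ∀ᶠ y in 𝓝 x, DifferentiableAt ℝ g y ∧
      ∀ p, fderiv ℝ g y (EuclideanSpace.single p 1) = ∑ l, T p l * y l)
    (p q : ι) : T p q = T q p := by
  let A : EuclideanSpace ℝ ι →L[ℝ] EuclideanSpace ℝ ι →L[ℝ] ℝ :=
    ∑ p, ∑ l, T p l • (EuclideanSpace.proj l : EuclideanSpace ℝ ι →L[ℝ] ℝ).smulRight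
      (EuclideanSpace.proj p : EuclideanSpace ℝ ι →L[ℝ] ℝ)
  have hA : ∀ y p, A y (EuclideanSpace.single p 1) = ∑ l, T p l * y l := by
    intro y p
    simp [A]
  have hderiv : ∀ᶠ y in 𝓝 x, HasFDerivAt g (A y) y := hg.mono fun y ⟨hd, hpartial⟩ => by
    convert hd.hasFDerivAt
    exact ContinuousLinearMap.coe_injective <| (EuclideanSpace.basisFun ι ℝ).toBasis.ext
      fun p => by simpa using (hA y p).trans (hpartial p).symm
  simpa [hA] using second_derivative_symmetric_of_eventually hderiv A.hasFDerivAt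
    (EuclideanSpace.single q 1) (EuclideanSpace.single p 1)

end Calculus

namespace CurvSymm

variable {N : ℕ} {S : Fin N → Fin N → Fin N → Fin N → ℝ}

theorem fderiv_fderiv_apply_single (hS : CurvSymm S)
    {f : Fin N → EuclideanSpace ℝ (Fin N) → ℝ} {x : EuclideanSpace ℝ (Fin N)}
    (hf : ∀ i, ContDiffAt ℝ 2 (f i) x)
    (hε : ∀ i j, (fun y => (1/2) * (fderiv ℝ (f i) y (EuclideanSpace.single j 1)
        + fderiv ℝ (f j) y (EuclideanSpace.single i 1)))
      =ᶠ[𝓝 x] fun y => (1/6) * ∑ k, ∑ l, S i k j l * y k * y l)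
    (i j k : Fin N) :
    fderiv ℝ (fderiv ℝ (f i)) x (EuclideanSpace.single j 1) (EuclideanSpace.single k 1)
      = ∑ l, (1/3) * (S i j k l + S i k j l) * x l := by
  obtain ⟨hanti₁, hanti₂, hpair, -⟩ := hS
  rw [fderiv_fderiv_apply_eq_of_symmetrized_fderiv hf hε, fderiv_quadratic_apply_single,
    fderiv_quadratic_apply_single, fderiv_quadratic_apply_single, Finset.mul_sum, Finset.mul_sum,
    Finset.mul_sum, ← Finset.sum_add_distrib, ← Finset.sum_sub_distrib]
  refine Finset.sum_congr rfl fun l _ => ?_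
  rw [hanti₁ j i k l, hpair j l k i, hanti₁ k i j l, hanti₂ i l j k]
  ring

theorem eq_zero_of_add_swap_symm (hS : CurvSymm S)
    (h : ∀ i j k l, S i j k l + S i k j l = S i l k j + S i k l j) (i j k l : Fin N) :
    S i j k l = 0 := by
  obtain ⟨-, hanti₂, -, hbianchi⟩ := hS
  linarith [h i l j k, hbianchi i l j k, hanti₂ i k j l, hanti₂ i j l k]

end CurvSymm

theorem saint_venant_rigidity_general (m : ℕ)
    (S : Fin m → Fin m → Fin m → Fin m → ℝ) (hS : CurvSymm S)
    (b : EuclideanSpace ℝ (Fin m) → Fin m → ℝ)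
    (hb : ContDiffOn ℝ 2 b (Metric.ball 0 1))
    (hsymgrad : ∀ i j : Fin m, ∀ x ∈ Metric.ball (0 : EuclideanSpace ℝ (Fin m)) 1,
      (1/2) * (fderiv ℝ (fun z => b z i) x (EuclideanSpace.single j 1)
          + fderiv ℝ (fun z => b z j) x (EuclideanSpace.single i 1))
        = (1/6) * ∑ k, ∑ l, S i k j l * x k * x l) :
    ∀ i k j l : Fin m, S i k j l = 0 := by
  have hC2 : ∀ y ∈ Metric.ball 0 1, ∀ i, ContDiffAt ℝ 2 (fun z => b z i) y := fun y hy =>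
    contDiffAt_pi.1 (hb.contDiffAt (Metric.isOpen_ball.mem_nhds hy))
  have hHess : ∀ y ∈ Metric.ball 0 1, ∀ i j k, fderiv ℝ (fderiv ℝ (fun z => b z i)) y
      (EuclideanSpace.single j 1) (EuclideanSpace.single k 1)
        = ∑ l, (1/3) * (S i j k l + S i k j l) * y l := fun y hy =>
    hS.fderiv_fderiv_apply_single (hC2 y hy) fun i j =>
      eventually_of_mem (Metric.isOpen_ball.mem_nhds hy) (hsymgrad i j)
  refine hS.eq_zero_of_add_swap_symm fun i j k l => ?_
  have hlinear : ∀ᶠ y in 𝓝 0,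
      DifferentiableAt ℝ (fun y => fderiv ℝ (fun z => b z i) y (EuclideanSpace.single k 1)) y ∧
      ∀ p, fderiv ℝ (fun y => fderiv ℝ (fun z => b z i) y (EuclideanSpace.single k 1)) y
        (EuclideanSpace.single p 1) = ∑ l, (1/3) * (S i p k l + S i k p l) * y l := by
    filter_upwards [Metric.ball_mem_nhds 0 one_pos] with y hy
    have hd : DifferentiableAt ℝ (fderiv ℝ (fun z => b z i)) y :=
      ((hC2 y hy i).fderiv_right (m := 1) le_rfl).differentiableAt one_ne_zero
    refine ⟨hd.clm_apply (differentiableAt_const _), fun p => ?_⟩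
    rw [fderiv_clm_apply hd (differentiableAt_const _)]
    simpa using hHess y hy i p k
  linarith [symm_of_eventually_fderiv_apply_single_eq _ hlinear j l]

/-- (Saint-Venant rigidity for quadratic symmetrized
gradients; `Q₃ = 0` implies `𝒜″ = 0`, from the proof of Corollary 5.2.)
If the quadratic field `x ↦ (1/6) Σ S_{ikjl} x_k x_l` is the symmetrized
gradient of a C² map on the unit ball, and `S` (indexed as `S i k j l`) has
the curvature symmetries, then `S = 0`. -/
theorem saint_venant_rigidity (m : ℕ) (hm : 1 ≤ m)
    (S : Fin m → Fin m → Fin m → Fin m → ℝ) (hS : CurvSymm S)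
    (b : EuclideanSpace ℝ (Fin m) → Fin m → ℝ)
    (hb : ContDiffOn ℝ 2 b (Metric.ball 0 1))
    (hsymgrad : ∀ i j : Fin m, ∀ x ∈ Metric.ball (0 : EuclideanSpace ℝ (Fin m)) 1,
      (1/2) * (fderiv ℝ (fun z => b z i) x (EuclideanSpace.single j 1)
          + fderiv ℝ (fun z => b z j) x (EuclideanSpace.single i 1))
        = (1/6) * ∑ k, ∑ l, S i k j l * x k * x l) :
    ∀ i k j l : Fin m, S i k j l = 0 :=
  saint_venant_rigidity_general m S hS b hb hsymgrad
end
end
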